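/- Let D be a finite kernel-perfect digraph with nonempty vertex set and α = (α_v)_{v ∈ V(D)} a family of mutually disjoint finite digraphs with nonempty vertex sets such that each α_u has a semi-Grundy function f_u. Then σ(D,α) possesses a semi-Grundy function S such that max{S(x) : x ∈ V(σ(D,α))} ≤ (Σ_{u ∈ V(D)} m_u) + |V(D)| − 1, where m_u = max{f_u(x) : x ∈ V(α_u)}. -/

import Mathlib

/-- `N` is a kernel of the subdigraph of `A` induced by `X`. -/
def IsKernelIn {V : Type*} (A : V → V → Prop) (X N : Set V) : Prop :=
  N ⊆ X ∧ (∀ x ∈ N, ∀ y ∈ N, ¬ A x y) ∧ ∀ z ∈ X, z ∉ N → ∃ y ∈ N, A z y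

/-- `s` is a semi-Grundy function on the digraph with arc relation `A`. -/
def IsSemiGrundy {V : Type*} (A : V → V → Prop) (s : V → ℕ) : Prop :=
  (∀ x y, A x y → s y ≠ s x) ∧
    (∀ x y, A x y → s x < s y → ∃ z, A y z ∧ s z = s x)

/-- Arc relation of the cartesian product `σ(D,α)`. -/
inductive SigmaArc {U : Type*} {W : U → Type*} (AD : U → U → Prop)
    (Aα : ∀ u, W u → W u → Prop) : (Σ u, W u) → (Σ u, W u) → Prop
  | inner (u : U) (x y : W u) : Aα u x y → SigmaArc AD Aα ⟨u, x⟩ ⟨u, y⟩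
  | cross (u v : U) (x : W u) (y : W v) : AD u v → SigmaArc AD Aα ⟨u, x⟩ ⟨v, y⟩

/-!
Peel `σ(D,α)` off in rounds. A round takes a kernel `N` of the subdigraph of `D` induced by the
copies `α_u` that still have vertices left, and removes, from each remaining `α_u` with `u ∈ N`,
its vertices of least `f_u`-value; `S(x)` is the round in which `x` is removed. Independence of
`N` together with the minimality of the removed values gives condition (1) of a semi-Grundy
function, and absorption by `N` together with the semi-Grundy property of `f_u` gives (2).
Vertices of `α_u` with equal `f_u`-value leave together, so the process really acts on the at most
`∑ (m_u + 1)` pairs `(u, f_u(x))`, at least one of which goes in every round.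
-/

open Finset

theorem IsKernelIn.nonempty {V : Type*} {A : V → V → Prop} {X N : Set V}
    (hN : IsKernelIn A X N) (hX : X.Nonempty) : N.Nonempty := by
  obtain ⟨x, hx⟩ := hX
  by_cases hxN : x ∈ N
  · exact ⟨x, hxN⟩
  · obtain ⟨y, hy, -⟩ := hN.2.2 x hx hxN
    exact ⟨y, hy⟩

namespace KernelPeeling

open scoped Classical

variable {U β : Type*} [LinearOrder β] (ker : Set U → Set U) {AD : U → U → Prop}

noncomputable def layer (Ω : Finset (U × β)) : Finset (U × β) :=
  Ω.filter fun q => q.1 ∈ ker (Ω.image Prod.fst) ∧ ∀ q' ∈ Ω, q'.1 = q.1 → q.2 ≤ q'.2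

noncomputable def stage (P : Finset (U × β)) : ℕ → Finset (U × β)
  | 0 => P
  | s + 1 => stage P s \ layer ker (stage P s)

noncomputable def layerIndex (P : Finset (U × β)) (q : U × β) : ℕ :=
  sInf {s | q ∉ stage ker P (s + 1)}

variable {ker}

theorem mem_layer {Ω : Finset (U × β)} {q : U × β} :
    q ∈ layer ker Ω ↔
      q ∈ Ω ∧ q.1 ∈ ker (Ω.image Prod.fst) ∧ ∀ q' ∈ Ω, q'.1 = q.1 → q.2 ≤ q'.2 :=
  mem_filter

theorem layer_subset (Ω : Finset (U × β)) : layer ker Ω ⊆ Ω :=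
  filter_subset _ _

theorem exists_mem_layer (hker : ∀ X, IsKernelIn AD X (ker X))
    {Ω : Finset (U × β)} {u : U} (hu : u ∈ ker (Ω.image Prod.fst)) :
    ∃ b, (u, b) ∈ layer ker Ω := by
  obtain ⟨q₀, hq₀, hq₀u⟩ := mem_image.1 ((hker _).1 hu)
  obtain ⟨q, hq, hmin⟩ :=
    (Ω.filter (·.1 = u)).exists_min_image Prod.snd ⟨q₀, mem_filter.2 ⟨hq₀, hq₀u⟩⟩
  obtain ⟨hqΩ, rfl⟩ := mem_filter.1 hq
  exact ⟨q.2, mem_layer.2 ⟨hqΩ, hu, fun q' hq' hq'u => hmin q' (mem_filter.2 ⟨hq', hq'u⟩)⟩⟩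

theorem layer_nonempty (hker : ∀ X, IsKernelIn AD X (ker X))
    {Ω : Finset (U × β)} (hΩ : Ω.Nonempty) : (layer ker Ω).Nonempty := by
  obtain ⟨u, hu⟩ := (hker _).nonempty (coe_nonempty.2 (hΩ.image Prod.fst))
  obtain ⟨b, hb⟩ := exists_mem_layer hker hu
  exact ⟨_, hb⟩

variable {P : Finset (U × β)}

theorem stage_succ (s : ℕ) :
    stage ker P (s + 1) = stage ker P s \ layer ker (stage ker P s) :=
  rfl

theorem stage_antitone : Antitone (stage ker P) :=
  antitone_nat_of_succ_le fun _ => sdiff_subset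

theorem stage_subset (s : ℕ) : stage ker P s ⊆ P :=
  stage_antitone (Nat.zero_le s)

theorem card_stage_le (hker : ∀ X, IsKernelIn AD X (ker X)) (s : ℕ) :
    #(stage ker P s) ≤ #P - s := by
  induction s with
  | zero => exact le_rfl
  | succ s ih =>
    rcases (stage ker P s).eq_empty_or_nonempty with hempty | hne
    · rw [stage_succ, hempty, empty_sdiff, card_empty]
      exact Nat.zero_le _
    · have := card_lt_card (sdiff_ssubset (layer_subset _) (layer_nonempty hker hne))
      rw [stage_succ]
      omega

theorem stage_card_eq_empty (hker : ∀ X, IsKernelIn AD X (ker X)) :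
    stage ker P #P = ∅ :=
  card_eq_zero.1 (by simpa using card_stage_le (P := P) hker #P)

theorem layerIndex_le {q : U × β} {s : ℕ} (h : q ∉ stage ker P (s + 1)) :
    layerIndex ker P q ≤ s :=
  Nat.sInf_le h

theorem mem_stage_of_le_layerIndex {q : U × β} (hq : q ∈ P) {s : ℕ}
    (h : s ≤ layerIndex ker P q) : q ∈ stage ker P s := by
  cases s with
  | zero => exact hq
  | succ t => exact not_not.1 (Nat.notMem_of_lt_sInf h)

theorem notMem_stage_layerIndex_succ (hker : ∀ X, IsKernelIn AD X (ker X)) (q : U × β) :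
    q ∉ stage ker P (layerIndex ker P q + 1) := by
  refine Nat.sInf_mem (s := {s | q ∉ stage ker P (s + 1)}) ⟨#P, fun hq => ?_⟩
  simpa [stage_card_eq_empty hker] using stage_antitone (Nat.le_succ #P) hq

theorem mem_layer_layerIndex (hker : ∀ X, IsKernelIn AD X (ker X))
    {q : U × β} (hq : q ∈ P) : q ∈ layer ker (stage ker P (layerIndex ker P q)) := by
  by_contra hout
  exact notMem_stage_layerIndex_succ hker q
    (mem_sdiff.2 ⟨mem_stage_of_le_layerIndex hq le_rfl, hout⟩)

theorem layerIndex_eq_of_mem_layer {q : U × β} {s : ℕ}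
    (h : q ∈ layer ker (stage ker P s)) : layerIndex ker P q = s := by
  have hnot : q ∉ stage ker P (s + 1) := fun h' => (mem_sdiff.1 h').2 h
  refine le_antisymm (layerIndex_le hnot) (not_lt.1 fun hlt => ?_)
  have hleast : q ∉ stage ker P (layerIndex ker P q + 1) :=
    Nat.sInf_mem (s := {t | q ∉ stage ker P (t + 1)}) ⟨s, hnot⟩
  exact hleast (stage_antitone hlt (layer_subset _ h))

theorem layerIndex_lt_card (hker : ∀ X, IsKernelIn AD X (ker X))
    {q : U × β} (hq : q ∈ P) : layerIndex ker P q < #P := by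
  have hpos : 0 < #P := card_pos.2 ⟨q, hq⟩
  have : layerIndex ker P q ≤ #P - 1 :=
    layerIndex_le (by rw [Nat.sub_add_cancel hpos, stage_card_eq_empty hker]; exact notMem_empty _)
  omega

theorem snd_le_of_layerIndex_le (hker : ∀ X, IsKernelIn AD X (ker X))
    {u : U} {a b : β} (ha : (u, a) ∈ P) (hb : (u, b) ∈ P)
    (h : layerIndex ker P (u, a) ≤ layerIndex ker P (u, b)) : a ≤ b :=
  (mem_layer.1 (mem_layer_layerIndex hker ha)).2.2 _ (mem_stage_of_le_layerIndex hb h) rfl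

theorem not_adj_of_layerIndex_eq (hker : ∀ X, IsKernelIn AD X (ker X))
    {q q' : U × β} (hq : q ∈ P) (hq' : q' ∈ P)
    (h : layerIndex ker P q = layerIndex ker P q') : ¬ AD q.1 q'.1 := by
  have hqN := (mem_layer.1 (mem_layer_layerIndex hker hq)).2.1
  have hq'N := (mem_layer.1 (mem_layer_layerIndex hker hq')).2.1
  rw [h] at hqN
  exact (hker _).2.1 _ hqN _ hq'N

theorem exists_adj_layerIndex_eq (hker : ∀ X, IsKernelIn AD X (ker X))
    {q q' : U × β} (hq : q ∈ P) (hq' : q' ∈ P) (hadj : AD q.1 q'.1)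
    (hlt : layerIndex ker P q < layerIndex ker P q') :
    ∃ r ∈ P, AD q'.1 r.1 ∧ layerIndex ker P r = layerIndex ker P q := by
  set Ω := stage ker P (layerIndex ker P q)
  have hq'Ω : q' ∈ Ω := mem_stage_of_le_layerIndex hq' hlt.le
  have hqN := (mem_layer.1 (mem_layer_layerIndex hker hq)).2.1
  have hq'N : q'.1 ∉ ker (Ω.image Prod.fst) := fun h => (hker _).2.1 _ hqN _ h hadj
  obtain ⟨w, hwN, hq'w⟩ := (hker _).2.2 q'.1 (mem_image_of_mem _ hq'Ω) hq'N
  obtain ⟨b, hb⟩ := exists_mem_layer hker hwN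
  exact ⟨(w, b), stage_subset _ (layer_subset _ hb), hq'w, layerIndex_eq_of_mem_layer hb⟩

end KernelPeeling

theorem SigmaArc.isSemiGrundy_of_layering {U : Type*} {W : U → Type*} {AD : U → U → Prop}
    {Aα : ∀ u, W u → W u → Prop} {f : ∀ u, W u → ℕ} (hf : ∀ u, IsSemiGrundy (Aα u) (f u))
    (ρ : U × ℕ → ℕ) (hle : ∀ u (x y : W u), ρ (u, f u x) ≤ ρ (u, f u y) → f u x ≤ f u y)
    (hindep : ∀ u v (x : W u) (y : W v), ρ (u, f u x) = ρ (v, f v y) → ¬ AD u v)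
    (habs : ∀ u v (x : W u) (y : W v), AD u v → ρ (u, f u x) < ρ (v, f v y) →
      ∃ w, ∃ z : W w, AD v w ∧ ρ (w, f w z) = ρ (u, f u x)) :
    IsSemiGrundy (SigmaArc AD Aα) fun p => ρ (p.1, f p.1 p.2) := by
  refine ⟨fun p q harc heq => ?_, fun p q harc hlt => ?_⟩
  · cases harc with
    | inner u x y hxy =>
      exact (hf u).1 x y hxy (le_antisymm (hle u y x heq.le) (hle u x y heq.ge))
    | cross u v x y huv => exact hindep u v x y heq.symm huv
  · cases harc with
    | inner u x y hxy =>
      have hfxy := lt_of_le_of_ne (hle u x y hlt.le) ((hf u).1 x y hxy).symm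
      obtain ⟨z, hyz, hzx⟩ := (hf u).2 x y hxy hfxy
      exact ⟨⟨u, z⟩, .inner u y z hyz, by simp only [hzx]⟩
    | cross u v x y huv =>
      obtain ⟨w, z, hvw, hz⟩ := habs u v x y huv hlt
      exact ⟨⟨w, z⟩, .cross v w y z hvw, hz⟩

theorem card_image_sigma_le_sum_sup_add_one {U : Type*} [Fintype U] [DecidableEq U]
    {W : U → Type*} [∀ u, Fintype (W u)] (f : ∀ u, W u → ℕ) :
    #(univ.image fun p : Σ u, W u => (p.1, f p.1 p.2)) ≤ ∑ u, (univ.sup (f u) + 1) :=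
  calc _ ≤ #(univ.biUnion fun u => (range (univ.sup (f u) + 1)).image (Prod.mk u)) := by
        refine card_le_card fun q hq => ?_
        obtain ⟨⟨u, x⟩, -, rfl⟩ := mem_image.1 hq
        simp only [mem_biUnion, mem_image, mem_range, mem_univ, true_and]
        exact ⟨u, f u x, Nat.lt_succ_of_le (le_sup (mem_univ x)), rfl⟩
    _ ≤ ∑ u, #((range (univ.sup (f u) + 1)).image (Prod.mk u)) := card_biUnion_le
    _ ≤ ∑ u, (univ.sup (f u) + 1) :=
        sum_le_sum fun u _ => card_image_le.trans (card_range _).le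

theorem cartProd_semiGrundy_bound_general {U : Type*} [Fintype U]
    {W : U → Type*} [∀ u, Fintype (W u)]
    (AD : U → U → Prop) (Aα : ∀ u, W u → W u → Prop)
    (hKP : ∀ X : Set U, ∃ N : Set U, IsKernelIn AD X N)
    (f : ∀ u, W u → ℕ) (hf : ∀ u, IsSemiGrundy (Aα u) (f u)) :
    ∃ S : (Σ u, W u) → ℕ, IsSemiGrundy (SigmaArc AD Aα) S ∧
      Finset.univ.sup S ≤
        (∑ u, Finset.univ.sup (f u)) + Fintype.card U - 1 := by
  classical
  choose ker hker using hKP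
  set P := univ.image fun p : Σ u, W u => (p.1, f p.1 p.2)
  have hP : ∀ u (x : W u), (u, f u x) ∈ P := fun u x =>
    mem_image.2 ⟨⟨u, x⟩, mem_univ _, rfl⟩
  refine ⟨fun p => KernelPeeling.layerIndex ker P (p.1, f p.1 p.2),
    SigmaArc.isSemiGrundy_of_layering hf _ ?_ ?_ ?_, ?_⟩
  · exact fun u x y => KernelPeeling.snd_le_of_layerIndex_le hker (hP u x) (hP u y)
  · exact fun u v x y => KernelPeeling.not_adj_of_layerIndex_eq hker (hP u x) (hP v y)
  · intro u v x y huv hlt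
    obtain ⟨r, hr, hvr, hrx⟩ :=
      KernelPeeling.exists_adj_layerIndex_eq hker (hP u x) (hP v y) huv hlt
    obtain ⟨⟨w, z⟩, -, rfl⟩ := mem_image.1 hr
    exact ⟨w, z, hvr, hrx⟩
  · have hcard : #P ≤ ∑ u, univ.sup (f u) + Fintype.card U := by
      simpa [sum_add_distrib] using card_image_sigma_le_sum_sup_add_one f
    refine Finset.sup_le fun p _ => ?_
    have hlt := KernelPeeling.layerIndex_lt_card hker (hP p.1 p.2)
    omega

theorem cartProd_semiGrundy_bound {U : Type*} [Fintype U] [Nonempty U]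
    {W : U → Type*} [∀ u, Fintype (W u)] [∀ u, Nonempty (W u)]
    (AD : U → U → Prop) (Aα : ∀ u, W u → W u → Prop)
    (hKP : ∀ X : Set U, ∃ N : Set U, IsKernelIn AD X N)
    (f : ∀ u, W u → ℕ) (hf : ∀ u, IsSemiGrundy (Aα u) (f u)) :
    ∃ S : (Σ u, W u) → ℕ, IsSemiGrundy (SigmaArc AD Aα) S ∧
      Finset.univ.sup S ≤
        (∑ u, Finset.univ.sup (f u)) + Fintype.card U - 1 :=
  cartProd_semiGrundy_bound_general AD Aα hKP f hf
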